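/- Let A be an n×n real matrix with tr(A) > 0, define K_U := max_{i≠j} (n/tr(A)) |a_{ii} − a_{jj}|, and let ε, δ ∈ (0,1). If K_U > 0 and the sample size N satisfies N > (K_U²/2) ε⁻² ln(2/δ), then the uniform unit vector trace estimator with replacement satisfies Pr(|tr_{U₁}^N(A) − tr(A)| ≤ ε·tr(A)) ≥ 1 − δ. -/

import Mathlib

open MeasureTheory Matrix

/-- `unitVec n j` is the `j`-th column of the scaled identity matrix `√n · I`,
i.e. `√n` times the `j`-th standard basis vector of `ℝⁿ`. -/
noncomputable def unitVec (n : ℕ) (j : Fin n) : Fin n → ℝ :=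
  fun k => Real.sqrt n * if k = j then 1 else 0

/-- The unit vector trace estimator `(1/N) ∑ᵢ wᵢᵗ A wᵢ`, where `wᵢ = unitVec n (f i)`
and `f : Fin N → Fin n` records which (scaled) unit vectors were drawn. -/
noncomputable def unitVectorEstimator (n N : ℕ) (A : Matrix (Fin n) (Fin n) ℝ)
    (f : Fin N → Fin n) : ℝ :=
  (1 / (N : ℝ)) * ∑ i : Fin N, (unitVec n (f i)) ⬝ᵥ A.mulVec (unitVec n (f i))

/-- The uniform probability measure on `Fin N → Fin n`: `N` indices drawn independently
and uniformly, i.e. unit vector sampling with replacement (`U₁`). -/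
noncomputable def withReplacementMeasure (n N : ℕ) : Measure (Fin N → Fin n) :=
  (Fintype.card (Fin N → Fin n) : ENNReal)⁻¹ • Measure.count

/-- The uniform probability measure on injective tuples of indices: `N` distinct indices
drawn uniformly without replacement (`U₂`). -/
noncomputable def withoutReplacementMeasure (n N : ℕ) :
    Measure {f : Fin N → Fin n // Function.Injective f} :=
  (Fintype.card {f : Fin N → Fin n // Function.Injective f} : ENNReal)⁻¹ • Measure.count

/-!
With `x j = n * A j j`, drawing `w = e_j` gives `wᵀ A w = x j`, so `N (tr_{U₁}^N(A) - tr A)` is a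
sum of `N` independent copies of `x J - tr A` with `J` uniform on `Fin n`. These are centred and
take values in an interval of length `K_U tr A`, so by the two-sided Hoeffding inequality the sum
exceeds `N ε tr A` in absolute value with probability at most `2 exp (-2 N ε² / K_U²)`, which the
choice of `N` makes smaller than `δ`.
-/

open ProbabilityTheory Real NNReal

namespace ProbabilityTheory.HasSubgaussianMGF

lemma measure_abs_sum_ge_le_of_iIndepFun {Ω ι : Type*} {mΩ : MeasurableSpace Ω}
    {μ : Measure Ω} {X : ι → Ω → ℝ} (h_indep : iIndepFun X μ) {c : ι → ℝ≥0} {s : Finset ι}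
    (h_subG : ∀ i ∈ s, HasSubgaussianMGF (X i) (c i) μ) {ε : ℝ} (hε : 0 ≤ ε) :
    μ.real {ω | ε ≤ |∑ i ∈ s, X i ω|} ≤ 2 * exp (-ε ^ 2 / (2 * ∑ i ∈ s, c i)) := by
  have h_indep_neg : iIndepFun (fun i ω ↦ -X i ω) μ :=
    h_indep.comp (fun _ ↦ Neg.neg) fun _ ↦ measurable_neg
  have h_split : {ω | ε ≤ |∑ i ∈ s, X i ω|}
      = {ω | ε ≤ ∑ i ∈ s, X i ω} ∪ {ω | ε ≤ ∑ i ∈ s, -X i ω} := by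
    ext ω
    simp [le_abs, Finset.sum_neg_distrib]
  rw [h_split, two_mul]
  refine (measureReal_union_le _ _).trans (add_le_add ?_ ?_)
  · exact measure_sum_ge_le_of_iIndepFun h_indep h_subG hε
  · exact measure_sum_ge_le_of_iIndepFun h_indep_neg (fun i hi ↦ (h_subG i hi).neg) hε

end ProbabilityTheory.HasSubgaussianMGF

lemma measureReal_abs_sum_sub_integral_ge_le_pi {Ω ι : Type*} [Fintype ι]
    {mΩ : MeasurableSpace Ω} {ν : Measure Ω} [IsProbabilityMeasure ν] {Y : Ω → ℝ}
    (hY : AEMeasurable Y ν) {a b : ℝ} (hab : ∀ᵐ ω ∂ν, Y ω ∈ Set.Icc a b) {ε : ℝ} (hε : 0 ≤ ε) :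
    (Measure.pi fun _ : ι ↦ ν).real {ω | ε ≤ |∑ i, (Y (ω i) - ν[Y])|}
      ≤ 2 * exp (-ε ^ 2 / (2 * Fintype.card ι * ((b - a) / 2) ^ 2)) := by
  have h_indep : iIndepFun (fun i ω ↦ Y (ω i) - ν[Y]) (Measure.pi fun _ : ι ↦ ν) :=
    iIndepFun_pi (X := fun _ y ↦ Y y - ν[Y]) fun _ ↦ hY.sub_const _
  have h_subG : ∀ i, HasSubgaussianMGF (fun ω ↦ Y (ω i) - ν[Y]) ((‖b - a‖₊ / 2) ^ 2)
      (Measure.pi fun _ : ι ↦ ν) := by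
    intro i
    refine HasSubgaussianMGF.of_map (X := fun y ↦ Y y - ν[Y]) (Y := Function.eval i)
      (measurable_pi_apply (X := fun _ : ι ↦ Ω) i).aemeasurable ?_
    rw [(measurePreserving_eval (fun _ : ι ↦ ν) i).map_eq]
    exact hasSubgaussianMGF_of_mem_Icc hY hab
  convert HasSubgaussianMGF.measure_abs_sum_ge_le_of_iIndepFun h_indep
    (fun i _ ↦ h_subG i) hε using 4
  simp [mul_assoc, div_pow]

lemma integral_uniformOn_univ {α : Type*} [Fintype α] [MeasurableSpace α]
    [MeasurableSingletonClass α] (f : α → ℝ) :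
    ∫ x, f x ∂uniformOn (Set.univ : Set α) = (∑ x, f x) / Fintype.card α := by
  rw [integral_fintype .of_finite, Finset.sum_div]
  refine Finset.sum_congr rfl fun x _ ↦ ?_
  simp [measureReal_def, uniformOn_univ, div_eq_inv_mul]

lemma ofReal_one_sub_le_measure_of_compl_subset {α : Type*} [MeasurableSpace α]
    {μ : Measure α} [IsProbabilityMeasure μ] {s t : Set α} (hs : MeasurableSet s)
    (hst : sᶜ ⊆ t) {δ : ℝ} (ht : μ.real t ≤ δ) : ENNReal.ofReal (1 - δ) ≤ μ s := by
  rw [← ofReal_measureReal]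
  refine ENNReal.ofReal_le_ofReal ?_
  have h_compl := probReal_compl_eq_one_sub (μ := μ) hs
  linarith [measureReal_mono (μ := μ) hst]

lemma exists_forall_mem_Icc_of_abs_sub_le {α : Type*} [Finite α] [Nonempty α] {x : α → ℝ}
    {R : ℝ} (hx : ∀ j k, |x j - x k| ≤ R) : ∃ a, ∀ j, x j ∈ Set.Icc a (a + R) := by
  obtain ⟨j₀, hj₀⟩ := Finite.exists_min x
  exact ⟨x j₀, fun j ↦ ⟨hj₀ j, by linarith [le_of_abs_le (hx j j₀)]⟩⟩

lemma withReplacementMeasure_eq_pi (n N : ℕ) :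
    withReplacementMeasure n N =
      Measure.pi fun _ : Fin N ↦ uniformOn (Set.univ : Set (Fin n)) := by
  rw [← uniformOn_pi (f := fun _ : Fin N ↦ Set.univ), Set.pi_univ]
  ext s -
  rw [uniformOn_univ, withReplacementMeasure, Measure.smul_apply, smul_eq_mul,
    ENNReal.div_eq_inv_mul]

lemma unitVec_dotProduct_mulVec_unitVec {n : ℕ} (A : Matrix (Fin n) (Fin n) ℝ) (j : Fin n) :
    unitVec n j ⬝ᵥ A *ᵥ unitVec n j = n * A j j := by
  simp only [unitVec, dotProduct, mulVec, mul_ite, mul_one, mul_zero, ite_mul, zero_mul,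
    Finset.sum_ite_eq', Finset.mem_univ, if_true]
  rw [mul_left_comm, Real.mul_self_sqrt (Nat.cast_nonneg n), mul_comm]

lemma unitVectorEstimator_sub_trace {n N : ℕ} (hN : N ≠ 0) (A : Matrix (Fin n) (Fin n) ℝ)
    (f : Fin N → Fin n) :
    unitVectorEstimator n N A f - A.trace = (∑ i, (n * A (f i) (f i) - A.trace)) / N := by
  simp only [unitVectorEstimator, unitVec_dotProduct_mulVec_unitVec, Finset.sum_sub_distrib,
    Finset.sum_const, Finset.card_univ, Fintype.card_fin, nsmul_eq_mul]
  field_simp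

lemma integral_uniformOn_univ_natCast_mul_diag {n : ℕ} (hn : n ≠ 0)
    (A : Matrix (Fin n) (Fin n) ℝ) :
    ∫ j, n * A j j ∂uniformOn (Set.univ : Set (Fin n)) = A.trace := by
  rw [integral_uniformOn_univ, ← Finset.mul_sum, Fintype.card_fin]
  field_simp
  rfl

lemma two_mul_exp_neg_lt_of_lt_mul_log {N K ε δ τ : ℝ} (hN : 0 < N) (hK : 0 < K) (hε : 0 < ε)
    (hδ : 0 < δ) (hτ : 0 < τ) (hNK : K ^ 2 / 2 / ε ^ 2 * log (2 / δ) < N) :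
    2 * exp (-(N * (ε * τ)) ^ 2 / (2 * N * (K * τ / 2) ^ 2)) < δ := by
  have h_exponent :
      -(N * (ε * τ)) ^ 2 / (2 * N * (K * τ / 2) ^ 2) = -(2 * N * ε ^ 2 / K ^ 2) := by
    field_simp
  have h_log : log (2 / δ) < 2 * N * ε ^ 2 / K ^ 2 := by
    rw [lt_div_iff₀ (by positivity)]
    rw [div_div, div_mul_eq_mul_div, div_lt_iff₀ (by positivity)] at hNK
    linarith
  calc 2 * exp (-(N * (ε * τ)) ^ 2 / (2 * N * (K * τ / 2) ^ 2))
      < 2 * exp (-log (2 / δ)) := by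
        rw [h_exponent]
        gcongr
    _ = δ := by
        rw [Real.exp_neg, exp_log (by positivity), inv_div]
        field_simp

/-- The constant `K_U`. -/
noncomputable def unitVectorConstant {n : ℕ} (A : Matrix (Fin n) (Fin n) ℝ) : ℝ :=
  ⨆ p : {p : Fin n × Fin n // p.1 ≠ p.2}, ((n : ℝ) / A.trace) * |A p.1.1 p.1.1 - A p.1.2 p.1.2|

lemma ne_zero_of_unitVectorConstant_pos {n : ℕ} {A : Matrix (Fin n) (Fin n) ℝ}
    (h : 0 < unitVectorConstant A) : n ≠ 0 := by
  rintro rfl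
  refine h.not_ge (Real.iSup_nonpos fun _ ↦ ?_)
  simp

lemma abs_sub_natCast_mul_diag_le {n : ℕ} {A : Matrix (Fin n) (Fin n) ℝ} (htr : 0 < A.trace)
    (j k : Fin n) : |n * A j j - n * A k k| ≤ unitVectorConstant A * A.trace := by
  rcases eq_or_ne j k with rfl | hjk
  · rw [sub_self, abs_zero]
    exact mul_nonneg (Real.iSup_nonneg fun _ ↦ by positivity) htr.le
  · have h : (n : ℝ) / A.trace * |A j j - A k k| ≤ unitVectorConstant A :=
      le_ciSup (f := fun p : {p : Fin n × Fin n // p.1 ≠ p.2} ↦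
        (n : ℝ) / A.trace * |A p.1.1 p.1.1 - A p.1.2 p.1.2|)
        (Finite.bddAbove_range _) ⟨(j, k), hjk⟩
    rw [div_mul_eq_mul_div, div_le_iff₀ htr] at h
    rwa [← mul_sub, abs_mul, Nat.abs_cast]

/-- sufficient bound for the unit vector estimator with replacement.
With `K_U = max_{i ≠ j} (n / tr(A)) |a_{ii} − a_{jj}| > 0`, if
`N > (K_U²/2) ε⁻² ln(2/δ)` then `Pr(|tr_{U₁}^N(A) − tr(A)| ≤ ε tr(A)) ≥ 1 − δ`. -/
theorem unit_vector_with_replacement_bound (n N : ℕ) (A : Matrix (Fin n) (Fin n) ℝ)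
    (htr : 0 < A.trace)
    (KU : ℝ)
    (hKU : KU = ⨆ p : {p : Fin n × Fin n // p.1 ≠ p.2},
      ((n : ℝ) / A.trace) * |A p.1.1 p.1.1 - A p.1.2 p.1.2|)
    (hKUpos : 0 < KU)
    (ε δ : ℝ) (hε : ε ∈ Set.Ioo (0 : ℝ) 1) (hδ : δ ∈ Set.Ioo (0 : ℝ) 1)
    (hN : (N : ℝ) > KU ^ 2 / 2 / ε ^ 2 * Real.log (2 / δ)) :
    withReplacementMeasure n N
        {f | |unitVectorEstimator n N A f - A.trace| ≤ ε * A.trace}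
      ≥ ENNReal.ofReal (1 - δ) := by
  obtain ⟨hε, -⟩ := hε
  obtain ⟨hδ, hδ₁⟩ := hδ
  change KU = unitVectorConstant A at hKU
  subst hKU
  have hn := ne_zero_of_unitVectorConstant_pos hKUpos
  have : Nonempty (Fin n) := Fin.pos_iff_nonempty.1 (Nat.pos_of_ne_zero hn)
  have h_log : 0 < log (2 / δ) := log_pos (by rw [lt_div_iff₀ hδ]; linarith)
  have hN₀ : (0 : ℝ) < N := lt_of_le_of_lt (by positivity) hN
  obtain ⟨a, ha⟩ := exists_forall_mem_Icc_of_abs_sub_le (abs_sub_natCast_mul_diag_le htr)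
  have h_tail := measureReal_abs_sum_sub_integral_ge_le_pi (ι := Fin N)
    (ν := uniformOn Set.univ) (.of_discrete) (ae_of_all _ ha) (ε := N * (ε * A.trace))
    (by positivity)
  rw [integral_uniformOn_univ_natCast_mul_diag hn, add_sub_cancel_left,
    Fintype.card_fin] at h_tail
  rw [withReplacementMeasure_eq_pi]
  refine ofReal_one_sub_le_measure_of_compl_subset (.of_discrete) (fun f hf ↦ ?_)
    (h_tail.trans (two_mul_exp_neg_lt_of_lt_mul_log hN₀ hKUpos hε hδ htr hN).le)
  rw [Set.mem_compl_iff, Set.mem_ofPred_eq, not_le,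
    unitVectorEstimator_sub_trace (Nat.cast_ne_zero.1 hN₀.ne'), abs_div, Nat.abs_cast,
    lt_div_iff₀ hN₀] at hf
  rw [Set.mem_ofPred_eq, mul_comm]
  exact hf.le
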